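/- For every n ≥ 7, ε(C_{3,3}^n) > ε(C_n). -/

import Mathlib

open SimpleGraph

/-- The eccentricity of a vertex: maximum distance to any vertex. -/
noncomputable def ecc {V : Type*} (G : SimpleGraph V) (v : V) : ℕ :=
  ⨆ u, G.dist v u

/-- The total eccentricity index: sum of eccentricities of all vertices. -/
noncomputable def totalEcc {V : Type*} [Fintype V] (G : SimpleGraph V) : ℕ :=
  ∑ v, ecc G v

/-- A pendant vertex: a vertex of degree one, i.e. with exactly one neighbour. -/
def IsPendant {V : Type*} (G : SimpleGraph V) (v : V) : Prop :=
  ∃! u, G.Adj v u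

/-- A cut vertex: a vertex whose removal disconnects the graph. -/
def IsCutVertex {V : Type*} (G : SimpleGraph V) (w : V) : Prop :=
  ¬ (G.induce {v | v ≠ w}).Connected

/-- distance between two subgraphs -/
noncomputable def subgraphDist {V : Type*} (G : SimpleGraph V) (B B' : G.Subgraph) : ℕ :=
  sInf {d | ∃ u ∈ B.verts, ∃ w ∈ B'.verts, G.dist u w = d}

/-- A 2-connected subgraph: at least two vertices, connected, and no cut vertex. -/
def TwoConn {V : Type*} {G : SimpleGraph V} (H : G.Subgraph) : Prop :=
  2 ≤ H.verts.ncard ∧ H.coe.Connected ∧ ∀ w, ¬ IsCutVertex H.coe w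

/-- A block: a maximal 2-connected subgraph. -/
def IsBlock {V : Type*} {G : SimpleGraph V} (H : G.Subgraph) : Prop :=
  TwoConn H ∧ ∀ H' : G.Subgraph, H ≤ H' → TwoConn H' → H' = H

/-- A pendant block: a block containing exactly one cut vertex of `G`. -/
def IsPendantBlock {V : Type*} (G : SimpleGraph V) (H : G.Subgraph) : Prop :=
  ∃! w, w ∈ H.verts ∧ IsCutVertex G w

/-- `G_{k,l}`: the graph obtained from `G` by attaching two new paths,
with `k` resp. `l` new vertices, at the vertex `v`. -/
def attachTwoPaths {V : Type*} (G : SimpleGraph V) (v : V) (k l : ℕ) :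
    SimpleGraph (V ⊕ (Fin k ⊕ Fin l)) :=
  SimpleGraph.fromRel (fun p q =>
    match p, q with
    | .inl x, .inl y => G.Adj x y
    | .inl x, .inr (.inl i) => x = v ∧ i.val = 0
    | .inl x, .inr (.inr i) => x = v ∧ i.val = 0
    | .inr (.inl i), .inr (.inl j) => i.val + 1 = j.val
    | .inr (.inr i), .inr (.inr j) => i.val + 1 = j.val
    | _, _ => False)

/-- The graph obtained from `H1`, `H2` and the path `P_d = v_1 v_2 … v_d` by identifying
`u ∈ V(H1)`, `v ∈ V(H2)` and `v_1` into a single vertex.  The `Fin (d-1)` part records the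
path vertices `v_2, …, v_d`. -/
def glueMid {V1 V2 : Type*} (H1 : SimpleGraph V1) (H2 : SimpleGraph V2)
    (u : V1) (v : V2) (d : ℕ) :
    SimpleGraph (V1 ⊕ ({x : V2 // x ≠ v} ⊕ Fin (d - 1))) :=
  SimpleGraph.fromRel (fun p q =>
    match p, q with
    | .inl x, .inl y => H1.Adj x y
    | .inl x, .inr (.inl y) => x = u ∧ H2.Adj v y.1
    | .inl x, .inr (.inr i) => x = u ∧ i.val = 0
    | .inr (.inl x), .inr (.inl y) => H2.Adj x.1 y.1
    | .inr (.inr i), .inr (.inr j) => i.val + 1 = j.val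
    | _, _ => False)

/-- The graph obtained from `H1`, `H2` and the path `P_d = v_1 v_2 … v_d` by identifying
`u ∈ V(H1)` with `v_1` and `v ∈ V(H2)` with `v_d`.  The `Fin (d-1)` part records the path
vertices `v_2, …, v_d` (the last one being identified with `v`). -/
def glueEnds {V1 V2 : Type*} (H1 : SimpleGraph V1) (H2 : SimpleGraph V2)
    (u : V1) (v : V2) (d : ℕ) :
    SimpleGraph (V1 ⊕ ({x : V2 // x ≠ v} ⊕ Fin (d - 1))) :=
  SimpleGraph.fromRel (fun p q =>
    match p, q with
    | .inl x, .inl y => H1.Adj x y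
    | .inl x, .inr (.inr i) => x = u ∧ i.val = 0
    | .inr (.inl x), .inr (.inl y) => H2.Adj x.1 y.1
    | .inr (.inr i), .inr (.inl y) => i.val + 1 = d - 1 ∧ H2.Adj v y.1
    | .inr (.inr i), .inr (.inr j) => i.val + 1 = j.val
    | _, _ => False)

/-- `U_{n,g}^l`: the unicyclic graph on `n` vertices obtained by joining one end vertex of
the path `P_{n-g}` to a vertex of the cycle `C_g` by an edge. -/
def UnlGraph (n g : ℕ) : SimpleGraph (Fin (n - g) ⊕ Fin g) :=
  SimpleGraph.fromRel (fun p q =>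
    match p, q with
    | .inl i, .inl j => i.val + 1 = j.val
    | .inl i, .inr j => i.val + 1 = n - g ∧ j.val = 0
    | .inr i, .inr j => i.val + 1 = j.val ∨ (i.val = 0 ∧ j.val + 1 = g)
    | _, _ => False)

/-- `U_{n,g}^p`: the unicyclic graph on `n` vertices obtained by attaching `n - g` pendant
vertices to one vertex of the cycle `C_g`. -/
def UnpGraph (n g : ℕ) : SimpleGraph (Fin g ⊕ Fin (n - g)) :=
  SimpleGraph.fromRel (fun p q =>
    match p, q with
    | .inl i, .inl j => i.val + 1 = j.val ∨ (i.val = 0 ∧ j.val + 1 = g)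
    | .inl i, .inr _ => i.val = 0
    | _, _ => False)

/-- The graph obtained by joining the vertex `u` of `H` to the pendant vertex of
`U_{r,g}^l` by an edge. -/
def joinPendant {V : Type*} (H : SimpleGraph V) (u : V) (r g : ℕ) :
    SimpleGraph (V ⊕ (Fin (r - g) ⊕ Fin g)) :=
  SimpleGraph.fromRel (fun p q =>
    match p, q with
    | .inl x, .inl y => H.Adj x y
    | .inl x, .inr (.inl i) => x = u ∧ i.val = 0
    | .inr a, .inr b => (UnlGraph r g).Adj a b
    | _, _ => False)

/-- `C_{m1,m2}^n` in the case `n = m1 + m2 - 1`: two cycles `C_{m1}` and `C_{m2}`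
sharing exactly one vertex (the vertex `0`). -/
def twoCyclesGlued (m1 m2 : ℕ) : SimpleGraph (Fin (m1 + m2 - 1)) :=
  SimpleGraph.fromRel (fun i j =>
    (i.val + 1 = j.val ∧ j.val < m1) ∨ (i.val = 0 ∧ j.val + 1 = m1)
    ∨ (i.val = 0 ∧ j.val = m1) ∨ (m1 ≤ i.val ∧ i.val + 1 = j.val)
    ∨ (i.val = 0 ∧ j.val + 2 = m1 + m2))

/-- `C_{3,3}^n` for `n > 5`: two triangles `{0,1,2}` and `{n-3,n-2,n-1}` joined by the path
`2, 3, …, n-3` (a path on `n - 4` vertices whose ends are identified with a vertex of each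
triangle). -/
def C33 (n : ℕ) : SimpleGraph (Fin n) :=
  SimpleGraph.fromRel (fun i j =>
    (i.val = 0 ∧ j.val = 1) ∨ (i.val = 0 ∧ j.val = 2) ∨ (i.val = 1 ∧ j.val = 2)
    ∨ (2 ≤ i.val ∧ i.val + 1 = j.val ∧ j.val + 3 ≤ n)
    ∨ (i.val + 3 = n ∧ j.val + 2 = n) ∨ (i.val + 2 = n ∧ j.val + 1 = n)
    ∨ (i.val + 3 = n ∧ j.val + 1 = n))

/-- `T(l, m, d)`: the tree obtained from the path `P_d` by attaching `l` pendant vertices at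
one end and `m` pendant vertices at the other end. -/
def Tlmd (l m d : ℕ) : SimpleGraph (Fin d ⊕ (Fin l ⊕ Fin m)) :=
  SimpleGraph.fromRel (fun p q =>
    match p, q with
    | .inl i, .inl j => i.val + 1 = j.val
    | .inl i, .inr (.inl _) => i.val = 0
    | .inl i, .inr (.inr _) => i.val + 1 = d
    | _, _ => False)

/-- `K_m^n(l_1, …, l_m)`: the graph obtained from the complete graph `K_m` by identifying,
for each `i`, one end vertex of a path on `l i` vertices with the `i`-th vertex of `K_m`.
The vertex `⟨i, 0⟩` is the `i`-th vertex of the complete graph. -/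
def Kmn (m : ℕ) (l : Fin m → ℕ) : SimpleGraph ((i : Fin m) × Fin (l i)) :=
  SimpleGraph.fromRel (fun p q =>
    (p.1 = q.1 ∧ p.2.val + 1 = q.2.val) ∨ (p.1 ≠ q.1 ∧ p.2.val = 0 ∧ q.2.val = 0))

/-- The graph obtained from `H`, `C_{m1}` and `C_{m2}` by identifying the vertex `w` of `H`,
a vertex of `C_{m1}` and a vertex of `C_{m2}` into one vertex. -/
def glueTwoCycles {V : Type*} (H : SimpleGraph V) (w : V) (m1 m2 : ℕ) :
    SimpleGraph (V ⊕ (Fin (m1 - 1) ⊕ Fin (m2 - 1))) :=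
  SimpleGraph.fromRel (fun p q =>
    match p, q with
    | .inl x, .inl y => H.Adj x y
    | .inl x, .inr (.inl i) => x = w ∧ (i.val = 0 ∨ i.val + 2 = m1)
    | .inl x, .inr (.inr i) => x = w ∧ (i.val = 0 ∨ i.val + 2 = m2)
    | .inr (.inl i), .inr (.inl j) => i.val + 1 = j.val
    | .inr (.inr i), .inr (.inr j) => i.val + 1 = j.val
    | _, _ => False)

/-- The graph obtained from `H` and the cycle `C_M` by identifying the vertex `w` of `H`
with one vertex of the cycle. -/
def glueOneCycle {V : Type*} (H : SimpleGraph V) (w : V) (M : ℕ) :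
    SimpleGraph (V ⊕ Fin (M - 1)) :=
  SimpleGraph.fromRel (fun p q =>
    match p, q with
    | .inl x, .inl y => H.Adj x y
    | .inl x, .inr i => x = w ∧ (i.val = 0 ∨ i.val + 2 = M)
    | .inr i, .inr j => i.val + 1 = j.val
    | _, _ => False)

/-!
Every vertex of `C_n` has eccentricity `⌊n/2⌋`. In `C_{3,3}^n`, measure each vertex by its
distance to the outer edge `{0, 1}` of the first triangle; this level changes by at most one
along an edge and ranges from `0` (at `0`) to `n - 3` (at `n - 1`). Hence a vertex of level `ℓ`
has eccentricity at least `max ℓ (n - 3 - ℓ) ≥ ⌈(n - 3)/2⌉`, and at least `n - 3` resp. `n - 4`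
at the four outer triangle vertices resp. the two junction vertices. These six vertices
already make up the difference with `n ⌊n/2⌋` once `n ≥ 7`.
-/

namespace SimpleGraph

variable {V : Type*} {G : SimpleGraph V} {f : V → ℕ}

lemma Walk.le_add_length_of_adj (hf : ∀ a b, G.Adj a b → f a ≤ f b + 1) {u v : V}
    (p : G.Walk u v) : f u ≤ f v + p.length := by
  induction p with
  | nil => simp
  | cons h _ ih =>
    rw [Walk.length_cons]
    have := hf _ _ h
    omega

lemma Reachable.le_add_dist_of_adj (hf : ∀ a b, G.Adj a b → f a ≤ f b + 1) {u v : V}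
    (h : G.Reachable u v) : f u ≤ f v + G.dist u v := by
  obtain ⟨p, hp⟩ := h.exists_walk_length_eq_dist
  exact hp ▸ p.le_add_length_of_adj hf

end SimpleGraph

open SimpleGraph

section Eccentricity

variable {V : Type*}

lemma dist_le_ecc [Finite V] (G : SimpleGraph V) (v u : V) : G.dist v u ≤ ecc G v :=
  le_ciSup (Set.finite_range _).bddAbove u

lemma totalEcc_le_card_mul [Fintype V] {G : SimpleGraph V} {m : ℕ} (h : ∀ v u, G.dist v u ≤ m) :
    totalEcc G ≤ Fintype.card V * m := by
  have hecc : ∀ v ∈ Finset.univ, ecc G v ≤ m := fun v _ =>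
    have : Nonempty V := ⟨v⟩
    ciSup_le (h v)
  simpa [totalEcc] using Finset.sum_le_card_nsmul _ _ _ hecc

end Eccentricity

open Fin.NatCast in
lemma cycleGraph_dist_add_le : ∀ {n : ℕ} (u d : Fin n), (cycleGraph n).dist u (u + d) ≤ d.val
  | 0, u, _ => u.elim0
  | 1, u, d => by simp [Subsingleton.elim (u + d) u]
  | m + 2, u, d => by
    have hwalk : ∀ k : ℕ, ∃ p : (cycleGraph (m + 2)).Walk u (u + (k : Fin (m + 2))),
        p.length = k := by
      intro k
      induction k with
      | zero => exact ⟨Walk.nil.copy rfl (by simp), by simp⟩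
      | succ k ih =>
        obtain ⟨p, hp⟩ := ih
        have hadj : (cycleGraph (m + 2)).Adj (u + k) (u + k + 1) := by
          rw [cycleGraph_adj]
          simp
        exact ⟨(p.concat hadj).copy rfl (by simp [add_assoc]), by simp [hp]⟩
    obtain ⟨p, hp⟩ := hwalk d.val
    simpa [hp] using dist_le p

lemma cycleGraph_dist_le {n : ℕ} (u v : Fin n) : (cycleGraph n).dist u v ≤ n / 2 := by
  rcases eq_or_ne u v with rfl | huv
  · simp
  have : NeZero n := ⟨u.pos.ne'⟩
  have h₁ : (cycleGraph n).dist u v ≤ (v - u).val := by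
    simpa using cycleGraph_dist_add_le u (v - u)
  have h₂ : (cycleGraph n).dist u v ≤ (u - v).val := by
    simpa [dist_comm] using cycleGraph_dist_add_le v (u - v)
  have h₃ : (u - v).val + (v - u).val = n := by
    rw [← neg_sub, Fin.val_neg, if_neg (sub_ne_zero.mpr huv.symm)]
    have := (v - u).isLt
    omega
  omega

lemma totalEcc_cycleGraph_le (n : ℕ) : totalEcc (cycleGraph n) ≤ n * (n / 2) := by
  simpa using totalEcc_le_card_mul (cycleGraph_dist_le (n := n))

lemma pathGraph_le_C33 (n : ℕ) : pathGraph n ≤ C33 n := by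
  intro u v h
  rw [pathGraph_adj] at h
  simp only [C33, fromRel_adj, Ne, Fin.ext_iff]
  refine ⟨by omega, ?_⟩
  rcases h with h | h
  · left; omega
  · right; omega

lemma C33_preconnected (n : ℕ) : (C33 n).Preconnected :=
  (pathGraph_preconnected n).mono (pathGraph_le_C33 n)

namespace C33

/-- The distance in `C33 n` from vertex `k` to the edge `{0, 1}`. -/
def level (n k : ℕ) : ℕ := min (k - 1) (n - 3)

lemma level_le_level_add_one {n : ℕ} (a b : Fin n) (h : (C33 n).Adj a b) :
    level n a ≤ level n b + 1 := by
  rw [C33, fromRel_adj] at h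
  unfold level
  omega

lemma max_level_le_ecc {n : ℕ} (v : Fin n) :
    max (level n v) (n - 3 - level n v) ≤ ecc (C33 n) v := by
  have hn := v.pos
  let first : Fin n := ⟨0, hn⟩
  let last : Fin n := ⟨n - 1, by omega⟩
  have h_first : level n first = 0 := by simp [level, first]
  have h_last : level n last = n - 3 := by simp only [level, last]; omega
  have h₁ := (C33_preconnected n v first).le_add_dist_of_adj level_le_level_add_one
  have h₂ := (C33_preconnected n last v).le_add_dist_of_adj level_le_level_add_one
  have h₃ := dist_le_ecc (C33 n) v first
  have h₄ := dist_le_ecc (C33 n) v last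
  rw [dist_comm] at h₂
  omega

lemma sum_range_max_level_ge {n : ℕ} (hn : 6 ≤ n) :
    4 * (n - 3) + 2 * (n - 4) + (n - 6) * ((n - 2) / 2) ≤
      ∑ k ∈ Finset.range n, max (level n k) (n - 3 - level n k) := by
  rw [← Finset.sum_range_add_sum_Ico _ (by omega : n - 3 ≤ n),
    ← Finset.sum_range_add_sum_Ico _ (by omega : 3 ≤ n - 3), Finset.sum_Ico_eq_sum_range _ (n - 3),
    show n - (n - 3) = 3 by omega]
  have hmiddle : (n - 6) * ((n - 2) / 2) ≤
      ∑ k ∈ Finset.Ico 3 (n - 3), max (level n k) (n - 3 - level n k) := by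
    simpa [show n - 3 - 3 = n - 6 by omega] using Finset.card_nsmul_le_sum (Finset.Ico 3 (n - 3))
      (fun k => max (level n k) (n - 3 - level n k)) ((n - 2) / 2)
      (fun k _ => by unfold level; omega)
  simp only [Finset.sum_range_succ, Finset.sum_range_zero, level] at hmiddle ⊢
  omega

lemma totalEcc_ge {n : ℕ} (hn : 6 ≤ n) :
    4 * (n - 3) + 2 * (n - 4) + (n - 6) * ((n - 2) / 2) ≤ totalEcc (C33 n) :=
  calc _ ≤ ∑ k ∈ Finset.range n, max (level n k) (n - 3 - level n k) := sum_range_max_level_ge hn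
    _ = ∑ v : Fin n, max (level n v) (n - 3 - level n v) := (Fin.sum_univ_eq_sum_range _ n).symm
    _ ≤ totalEcc (C33 n) := Finset.sum_le_sum fun v _ => max_level_le_ecc v

end C33

lemma mul_half_lt_of_seven_le {n : ℕ} (hn : 7 ≤ n) :
    n * (n / 2) < 4 * (n - 3) + 2 * (n - 4) + (n - 6) * ((n - 2) / 2) := by
  obtain ⟨m, rfl⟩ : ∃ m, n = m + 7 := ⟨n - 7, by omega⟩
  obtain ⟨c, hc⟩ : ∃ c, (m + 5) / 2 = c := ⟨_, rfl⟩
  have h₁ : (m + 7) / 2 = c + 1 := by omega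
  have h₂ : 2 * c ≤ m + 5 := by omega
  simp only [show m + 7 - 3 = m + 4 by omega, show m + 7 - 4 = m + 3 by omega,
    show m + 7 - 6 = m + 1 by omega, show m + 7 - 2 = m + 5 by omega, h₁, hc]
  have : (m + 7) * (c + 1) = m * c + m + 7 * c + 7 := by ring
  have : (m + 1) * c = m * c + c := by ring
  omega

theorem stmt6 (n : ℕ) (hn : 7 ≤ n) :
    totalEcc (cycleGraph n) < totalEcc (C33 n) :=
  calc totalEcc (cycleGraph n) ≤ n * (n / 2) := totalEcc_cycleGraph_le n
    _ < 4 * (n - 3) + 2 * (n - 4) + (n - 6) * ((n - 2) / 2) := mul_half_lt_of_seven_le hn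
    _ ≤ totalEcc (C33 n) := C33.totalEcc_ge (by omega)
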